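/- In the algebra of operators on functions Z_2^n → Z_2, for subsets a,b,c,d of [n] the identity m^a y^b m^c y^d = Σ m^a y^e holds, where the sum is over subsets e with d ⊆ e and e \ d ⊆ a + c ⊆ b (a + c denotes symmetric difference); in particular the product is 0 unless a + c ⊆ b. -/

import Mathlib

open Finset

/-- The space of all functions `Z_2^n → Z_2`. -/
abbrev V (n : ℕ) : Type := (Fin n → ZMod 2) → ZMod 2

/-- Indicator vector of a subset of `[n]`, identifying `P[n]` with `Z_2^n`. -/
def ind {n : ℕ} (a : Finset (Fin n)) : Fin n → ZMod 2 :=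
  fun i => if i ∈ a then 1 else 0

/-- `m^a`: the indicator function of the single point `a`. -/
def mFun {n : ℕ} (a : Finset (Fin n)) : V n :=
  fun b => if b = ind a then 1 else 0

/-- `x^a`: the monomial function, `x^a(b) = 1` iff `a ⊆ b`. -/
def xFun {n : ℕ} (a : Finset (Fin n)) : V n :=
  fun b => if ∀ i ∈ a, b i = 1 then 1 else 0

/-- `w^a = ∏_{i ∈ a} (x_i + 1)`: `w^a(b) = 1` iff `b ⊆ [n] \ a`. -/
def wFun {n : ℕ} (a : Finset (Fin n)) : V n :=
  fun b => if ∀ i ∈ a, b i = 0 then 1 else 0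

/-- The shift operator `s_i`, `(s_i f)(x) = f(x + e_i)`. -/
def shiftOp {n : ℕ} (i : Fin n) : Module.End (ZMod 2) (V n) where
  toFun f := fun x => f (x + Pi.single i 1)
  map_add' f g := rfl
  map_smul' c f := by funext x; rfl

/-- The Boolean partial derivative `∂_i`, `(∂_i f)(x) = f(x + e_i) + f(x)`. -/
def derivOp {n : ℕ} (i : Fin n) : Module.End (ZMod 2) (V n) where
  toFun f := fun x => f (x + Pi.single i 1) + f x
  map_add' f g := by
    funext x
    show (f + g) _ + (f + g) _ = _
    simp only [Pi.add_apply]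
    ring
  map_smul' c f := by
    funext x
    show (c • f) _ + (c • f) _ = _
    simp only [Pi.smul_apply, RingHom.id_apply, smul_eq_mul]
    ring

lemma derivOp_eq_shiftOp_add_one {n : ℕ} (i : Fin n) :
    derivOp (n := n) i = shiftOp i + 1 :=
  LinearMap.ext fun _ => rfl

lemma shiftOp_comm {n : ℕ} (i j : Fin n) : Commute (shiftOp i) (shiftOp (n := n) j) := by
  apply LinearMap.ext; intro f; funext x
  show f (x + Pi.single i 1 + Pi.single j 1) = f (x + Pi.single j 1 + Pi.single i 1)
  rw [add_right_comm]

lemma derivOp_comm {n : ℕ} (i j : Fin n) : Commute (derivOp i) (derivOp (n := n) j) := by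
  rw [derivOp_eq_shiftOp_add_one, derivOp_eq_shiftOp_add_one]
  exact ((shiftOp_comm i j).add_right (Commute.one_right _)).add_left
    ((Commute.one_left _).add_right (Commute.one_right _))

/-- `∂^b = ∏_{i ∈ b} ∂_i`. -/
def derivPow {n : ℕ} (b : Finset (Fin n)) : Module.End (ZMod 2) (V n) :=
  b.noncommProd derivOp (fun i _ j _ _ => derivOp_comm i j)

/-- `s^b = ∏_{i ∈ b} s_i`. -/
def shiftPow {n : ℕ} (b : Finset (Fin n)) : Module.End (ZMod 2) (V n) :=
  b.noncommProd shiftOp (fun i _ j _ _ => shiftOp_comm i j)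

/-- The operator of multiplication by a function `g`. -/
noncomputable def mulOp {n : ℕ} (g : V n) : Module.End (ZMod 2) (V n) :=
  LinearMap.mulLeft (ZMod 2) g

/-- `X_i`: multiplication by the `i`-th coordinate function. -/
noncomputable def XOp {n : ℕ} (i : Fin n) : Module.End (ZMod 2) (V n) :=
  mulOp (fun x => x i)

/-!
In characteristic 2, `∂_i = s_i + 1` and `s_i = ∂_i + 1`, where `s_i` is the shift by `e_i`;
expanding the commuting products gives `∂^b = Σ_{s ⊆ b} s^s` and `s^S = Σ_{u ⊆ S} ∂^u`.
Moving a shift past a point indicator, `m^a s^s m^c = [a + s = c] m^a s^s`, so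
`m^a ∂^b m^c = [S ⊆ b] m^a s^S` with `S = a + c`. Since `∂_i² = 0`, `∂^u ∂^d` is `∂^(u ∪ d)` for
disjoint `u, d` and `0` otherwise, hence `s^S ∂^d = Σ ∂^e` over `e ⊇ d` with `e \ d ⊆ S`.
-/

theorem Finset.noncommProd_add_one {R ι : Type*} [Semiring R] [DecidableEq ι] (f : ι → R)
    (hf : ∀ i j, Commute (f i) (f j)) (s : Finset ι) :
    s.noncommProd (fun i => f i + 1) (Set.pairwise_of_forall _ _ fun i j =>
        ((hf i j).add_right (Commute.one_right _)).add_left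
          ((Commute.one_left _).add_right (Commute.one_right _))) =
      ∑ t ∈ s.powerset, t.noncommProd f (Set.pairwise_of_forall _ _ hf) := by
  induction s using Finset.induction_on with
  | empty => simp
  | @insert i s hi ih =>
    rw [noncommProd_insert_of_notMem _ _ _ _ hi, ih, sum_powerset_insert hi, add_mul, one_mul,
      mul_sum, add_comm]
    congr 1
    refine sum_congr rfl fun t ht => ?_
    rw [noncommProd_insert_of_notMem _ _ _ _ fun hit => hi (mem_powerset.1 ht hit)]

section Operators

variable {n : ℕ}

lemma shiftOp_eq_derivOp_add_one (i : Fin n) : shiftOp i = derivOp i + 1 :=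
  LinearMap.ext fun f => funext fun x => (CharTwo.add_cancel_right _ (f x)).symm

lemma derivOp_mul_self (i : Fin n) : derivOp i * derivOp (n := n) i = 0 := by
  refine LinearMap.ext fun f => funext fun x => ?_
  show f (x + Pi.single i 1 + Pi.single i 1) + f (x + Pi.single i 1) +
    (f (x + Pi.single i 1) + f x) = 0
  rw [add_assoc x, ← Pi.single_add, CharTwo.add_self_eq_zero, Pi.single_zero, add_zero,
    add_comm (f x)]
  exact CharTwo.add_self_eq_zero _

lemma derivPow_eq_sum_shiftPow (b : Finset (Fin n)) :
    derivPow b = ∑ s ∈ b.powerset, shiftPow s :=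
  (noncommProd_congr rfl (fun i _ => derivOp_eq_shiftOp_add_one i) _).trans
    (noncommProd_add_one shiftOp shiftOp_comm b)

lemma shiftPow_eq_sum_derivPow (s : Finset (Fin n)) :
    shiftPow s = ∑ t ∈ s.powerset, derivPow t :=
  (noncommProd_congr rfl (fun i _ => shiftOp_eq_derivOp_add_one i) _).trans
    (noncommProd_add_one derivOp derivOp_comm s)

lemma shiftPow_empty : shiftPow (∅ : Finset (Fin n)) = 1 :=
  noncommProd_empty _ _

lemma shiftPow_insert {i : Fin n} {s : Finset (Fin n)} (hi : i ∉ s) :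
    shiftPow (insert i s) = shiftOp i * shiftPow s :=
  noncommProd_insert_of_notMem _ _ _ _ hi

lemma derivOp_mul_derivPow_erase {i : Fin n} {s : Finset (Fin n)} (hi : i ∈ s) :
    derivOp i * derivPow (s.erase i) = derivPow s :=
  mul_noncommProd_erase _ hi _ _

lemma derivPow_union {s t : Finset (Fin n)} (hst : Disjoint s t) :
    derivPow (s ∪ t) = derivPow s * derivPow t :=
  noncommProd_union_of_disjoint hst _ _

lemma derivOp_commute_derivPow (i : Fin n) (s : Finset (Fin n)) :
    Commute (derivOp i) (derivPow s) :=
  noncommProd_commute _ _ _ _ fun j _ => derivOp_comm i j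

lemma derivPow_mul_derivPow (s t : Finset (Fin n)) :
    derivPow s * derivPow t = if Disjoint s t then derivPow (s ∪ t) else 0 := by
  split_ifs with hst
  · exact (derivPow_union hst).symm
  obtain ⟨i, his, hit⟩ := not_disjoint_iff.1 hst
  rw [← derivOp_mul_derivPow_erase his, ← derivOp_mul_derivPow_erase hit]
  calc derivOp i * derivPow (s.erase i) * (derivOp i * derivPow (t.erase i))
      = derivOp i * derivOp i * (derivPow (s.erase i) * derivPow (t.erase i)) := by
        rw [mul_assoc, (derivOp_commute_derivPow i _).symm.left_comm, mul_assoc]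
    _ = 0 := by rw [derivOp_mul_self, zero_mul]

lemma shiftPow_mul_derivPow (s d : Finset (Fin n)) :
    shiftPow s * derivPow d =
      ∑ e ∈ univ.filter (fun e : Finset (Fin n) => d ⊆ e ∧ e \ d ⊆ s), derivPow e := by
  simp_rw [shiftPow_eq_sum_derivPow, sum_mul, derivPow_mul_derivPow]
  rw [sum_ite, sum_const_zero, add_zero]
  refine sum_nbij' (· ∪ d) (· \ d) ?_ ?_ ?_ ?_ fun _ _ => rfl
  · intro u hu
    simp only [mem_filter, mem_powerset] at hu
    exact mem_filter.2
      ⟨mem_univ _, subset_union_right, (union_sdiff_cancel_right hu.2).trans_subset hu.1⟩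
  · intro e he
    simp only [mem_filter, mem_univ, true_and] at he
    exact mem_filter.2 ⟨mem_powerset.2 he.2, sdiff_disjoint⟩
  · intro u hu
    exact union_sdiff_cancel_right (mem_filter.1 hu).2
  · intro e he
    exact sdiff_union_of_subset (mem_filter.1 he).2.1

lemma ind_symmDiff (s t : Finset (Fin n)) : ind (symmDiff s t) = ind s + ind t := by
  funext i
  simp only [ind, mem_symmDiff, Pi.add_apply]
  split_ifs <;> first | rfl | tauto

lemma ind_injective : Function.Injective (ind (n := n)) := by
  intro s t h
  ext i
  have hi := congrFun h i
  by_cases hs : i ∈ s <;> by_cases ht : i ∈ t <;> simp_all [ind]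

lemma ind_empty : ind (∅ : Finset (Fin n)) = 0 :=
  funext fun _ => if_neg (notMem_empty _)

lemma ind_insert {i : Fin n} {s : Finset (Fin n)} (hi : i ∉ s) :
    ind (insert i s) = Pi.single i 1 + ind s := by
  funext j
  by_cases hj : j = i
  · subst hj; simp [ind, hi]
  · simp [ind, hj]

lemma mFun_ind (a s : Finset (Fin n)) : mFun a (ind s) = if s = a then 1 else 0 := by
  simp [mFun, ind_injective.eq_iff]

lemma shiftPow_apply (s : Finset (Fin n)) (f : V n) (x : Fin n → ZMod 2) :
    shiftPow s f x = f (x + ind s) := by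
  induction s using Finset.induction_on generalizing x with
  | empty =>
    rw [shiftPow_empty, ind_empty, add_zero]
    rfl
  | @insert i s hi ih =>
    rw [shiftPow_insert hi]
    show shiftPow s f (x + Pi.single i 1) = _
    rw [ih, ind_insert hi, add_assoc]

lemma mulOp_mFun_mul_shiftPow_mul_mulOp (a s : Finset (Fin n)) (h : V n) :
    mulOp (mFun a) * shiftPow s * mulOp h =
      h (ind a + ind s) • (mulOp (mFun a) * shiftPow s) := by
  refine LinearMap.ext fun f => funext fun x => ?_
  show mFun a x * shiftPow s (h * f) x = h (ind a + ind s) * (mFun a x * shiftPow s f x)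
  rw [shiftPow_apply, shiftPow_apply]
  by_cases hx : x = ind a
  · rw [hx, Pi.mul_apply]; ring
  · simp [mFun, hx]

lemma mulOp_mFun_mul_derivPow_mul_mulOp_mFun (a b c : Finset (Fin n)) :
    mulOp (mFun a) * derivPow b * mulOp (mFun c) =
      if symmDiff a c ⊆ b then mulOp (mFun a) * shiftPow (symmDiff a c) else 0 := by
  have hsymm : ∀ s, symmDiff a s = c ↔ symmDiff a c = s := by
    intro s; rw [← symmDiff_right_inj (a := a), symmDiff_symmDiff_cancel_left, eq_comm]
  simp_rw [derivPow_eq_sum_shiftPow, mul_sum, sum_mul, mulOp_mFun_mul_shiftPow_mul_mulOp,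
    ← ind_symmDiff, mFun_ind, hsymm, ite_smul, one_smul, zero_smul]
  simp only [sum_ite_eq, mem_powerset]

end Operators

/-- `m^a y^b m^c y^d = Σ m^a y^e`, summed over `e` with `d ⊆ e` and
`e \ d ⊆ a + c ⊆ b`; in particular the product is `0` unless `a + c ⊆ b`. -/
theorem mOp_derivPow_mul (n : ℕ) (a b c d : Finset (Fin n)) :
    mulOp (mFun a) * derivPow b * mulOp (mFun c) * derivPow d =
      ∑ e ∈ Finset.univ.filter (fun e : Finset (Fin n) =>
          d ⊆ e ∧ e \ d ⊆ symmDiff a c ∧ symmDiff a c ⊆ b),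
        mulOp (mFun a) * derivPow e ∧
    (¬ symmDiff a c ⊆ b →
      mulOp (mFun a) * derivPow b * mulOp (mFun c) * derivPow d = 0) := by
  rw [mulOp_mFun_mul_derivPow_mul_mulOp_mFun]
  by_cases hb : symmDiff a c ⊆ b
  · rw [if_pos hb, mul_assoc, shiftPow_mul_derivPow, mul_sum]
    simp [hb]
  · simp [hb]
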